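/- arXiv:2004.08060 — 8 statements merged into one kernel-verified Lean document; each statement's English description precedes it below -/
import Mathlib

section
/- Let M be a nonempty set, let T > 0, and let H : M × [0,T) → ℝ be a function such that for every t ∈ [0,T) the supremum of H over M × [0,t] is finite. Let B ⊆ M × [0,T) be any subset, and let j > 0 be a real number. If there exists a point (p,t) ∈ B with H(p,t) ≥ j, then there exists a point (p₀,t₀) ∈ B with H(p₀,t₀) ≥ j and with the additional property that every (q,s) ∈ M × [0,T) with s ≤ t₀ and H(q,s) ≥ 4·H(p₀,t₀) satisfies (q,s) ∉ B. -/
/-!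
If no good point existed, every bad point with `H ≥ j` could be replaced by an earlier bad
point with at least four times the curvature. Iterating from a given bad point `(p, t)` produces
bad points in the slab `M × [0, t]` with `H ≥ 4ⁿ j`, which contradicts the boundedness of `H`
on that slab since `j > 0`.
-/

section PointPicking

variable {X α : Type*} [Preorder α] (τ : X → α) (f : X → ℝ) (B : Set X) {c : ℝ}

lemma exists_mem_pow_mul_le_of_forall_exists_mul_le {x : X} (hx : x ∈ B) (hfx : 0 ≤ f x)
    (hc : 1 ≤ c) (hstep : ∀ y ∈ B, τ y ≤ τ x → f x ≤ f y → ∃ z ∈ B, τ z ≤ τ y ∧ c * f y ≤ f z)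
    (n : ℕ) : ∃ y ∈ B, τ y ≤ τ x ∧ c ^ n * f x ≤ f y := by
  induction n with
  | zero => exact ⟨x, hx, le_rfl, by simp⟩
  | succ n ih =>
    obtain ⟨y, hyB, hyx, hy⟩ := ih
    have hxy : f x ≤ f y := (le_mul_of_one_le_left hfx (one_le_pow₀ hc)).trans hy
    obtain ⟨z, hzB, hzy, hz⟩ := hstep y hyB hyx hxy
    refine ⟨z, hzB, hzy.trans hyx, ?_⟩
    calc c ^ (n + 1) * f x = c * (c ^ n * f x) := by ring
      _ ≤ c * f y := by gcongr
      _ ≤ f z := hz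

lemma exists_mem_forall_lt_mul {x : X} (hx : x ∈ B) (hfx : 0 < f x) (hc : 1 < c)
    (hbdd : BddAbove (f '' {y ∈ B | τ y ≤ τ x})) :
    ∃ y ∈ B, τ y ≤ τ x ∧ f x ≤ f y ∧ ∀ z ∈ B, τ z ≤ τ y → f z < c * f y := by
  by_contra! hstep
  obtain ⟨C, hC⟩ := hbdd
  obtain ⟨n, hn⟩ := pow_unbounded_of_one_lt (C / f x) hc
  obtain ⟨y, hyB, hyx, hy⟩ :=
    exists_mem_pow_mul_le_of_forall_exists_mul_le τ f B hx hfx.le hc.le hstep n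
  have hyC : f y ≤ C := hC ⟨y, ⟨hyB, hyx⟩, rfl⟩
  have hCn : C < c ^ n * f x := (div_lt_iff₀ hfx).mp hn
  linarith

end PointPicking

theorem point_picking_general {M : Type*} (T : ℝ)
    (H : M → ℝ → ℝ)
    (hbdd : ∀ t, 0 ≤ t → t < T → ∃ C : ℝ, ∀ p : M, ∀ s : ℝ, 0 ≤ s → s ≤ t → H p s ≤ C)
    (B : Set (M × ℝ)) (hB : ∀ x ∈ B, 0 ≤ x.2 ∧ x.2 < T)
    (j : ℝ) (hj : 0 < j)
    (hex : ∃ p : M, ∃ t : ℝ, (p, t) ∈ B ∧ j ≤ H p t) :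
    ∃ p₀ : M, ∃ t₀ : ℝ, (p₀, t₀) ∈ B ∧ j ≤ H p₀ t₀ ∧
      ∀ q : M, ∀ s : ℝ, 0 ≤ s → s < T → s ≤ t₀ → 4 * H p₀ t₀ ≤ H q s → (q, s) ∉ B := by
  obtain ⟨p, t, hpB, hpH⟩ := hex
  obtain ⟨C, hC⟩ := hbdd t (hB _ hpB).1 (hB _ hpB).2
  have hslab : BddAbove ((fun x : M × ℝ ↦ H x.1 x.2) '' {y ∈ B | y.2 ≤ t}) := by
    refine ⟨C, ?_⟩
    rintro _ ⟨y, ⟨hyB, hyt⟩, rfl⟩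
    exact hC y.1 y.2 (hB y hyB).1 hyt
  obtain ⟨⟨p₀, t₀⟩, h₀B, -, hH₀, hgood⟩ := exists_mem_forall_lt_mul Prod.snd
    (fun x : M × ℝ ↦ H x.1 x.2) B hpB (hj.trans_le hpH) (by norm_num : (1 : ℝ) < 4) hslab
  refine ⟨p₀, t₀, h₀B, hpH.trans hH₀, fun q s _ _ hst hH hqB ↦ ?_⟩
  exact (hgood (q, s) hqB hst).not_ge hH

/-- Perelman-style point picking: if the set `B` of "bad" spacetime points in
`M × [0,T)` contains a point with `H ≥ j`, and `H` is bounded on every slab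
`M × [0,t]` with `t < T`, then there is a bad point `(p₀,t₀)` with `H ≥ j` such
that every spacetime point `(q,s)` with `s ≤ t₀` and `H(q,s) ≥ 4·H(p₀,t₀)` is good. -/
theorem point_picking {M : Type*} [Nonempty M] (T : ℝ) (hT : 0 < T)
    (H : M → ℝ → ℝ)
    (hbdd : ∀ t, 0 ≤ t → t < T → ∃ C : ℝ, ∀ p : M, ∀ s : ℝ, 0 ≤ s → s ≤ t → H p s ≤ C)
    (B : Set (M × ℝ)) (hB : ∀ x ∈ B, 0 ≤ x.2 ∧ x.2 < T)
    (j : ℝ) (hj : 0 < j)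
    (hex : ∃ p : M, ∃ t : ℝ, (p, t) ∈ B ∧ j ≤ H p t) :
    ∃ p₀ : M, ∃ t₀ : ℝ, (p₀, t₀) ∈ B ∧ j ≤ H p₀ t₀ ∧
      ∀ q : M, ∀ s : ℝ, 0 ≤ s → s < T → s ≤ t₀ → 4 * H p₀ t₀ ≤ H q s → (q, s) ∉ B :=
  point_picking_general T H hbdd B hB j hj hex
end

section
/- Let n ≥ 2 be an integer, u* > 0, and C > 0. Let 𝓗 : (0, u*] → ℝ be differentiable with 𝓗'(u) ≤ −𝓗(u)²/(n−1) for all u ∈ (0,u*], and let a : (0, u*] → ℝ be differentiable with a(u) > 0 and a'(u) = 𝓗(u)·a(u) for all u ∈ (0,u*]. Assume in addition that a(u) ≤ C·u^{n−1} for all u ∈ (0,u*]. Then the function u ↦ u^{1−n}·a(u) is non-increasing on (0, u*], and it converges as u → 0⁺ to a finite limit L satisfying 0 < (u*)^{1−n}·a(u*) ≤ L ≤ C. -/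
/-!
The root `q = a ^ (1/(n-1))` satisfies `q' = q 𝓗/(n-1)`, so the Riccati inequality
`𝓗' ≤ -𝓗²/(n-1)` is exactly `q'' = q (𝓗' + 𝓗²/(n-1))/(n-1) ≤ 0`. A positive concave
function on `(0, u*]` has nonincreasing chord slopes from the origin, so `q(u)/u` is
nonincreasing, and so is its `(n-1)`-th power `a(u)/u^(n-1)`. Bounded above by `C`, this
ratio converges as `u → 0⁺`.
-/

open Set Filter Topology

theorem HasDerivAt.rpow_const_of_eq_mul {a : ℝ → ℝ} {H u : ℝ} (ha : HasDerivAt a (H * a u) u)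
    (hpos : 0 < a u) (r : ℝ) : HasDerivAt (fun v => a v ^ r) (r * H * a u ^ r) u := by
  convert ha.rpow_const (p := r) (Or.inl hpos.ne') using 1
  rw [Real.rpow_sub hpos, Real.rpow_one]
  field_simp

theorem concaveOn_rpow_inv_of_riccati {D : Set ℝ} (hD : Convex ℝ D) {m : ℝ} (hm : 0 < m)
    {H H' a : ℝ → ℝ} (hH : ∀ u ∈ D, HasDerivAt H (H' u) u)
    (hH' : ∀ u ∈ D, H' u ≤ -H u ^ 2 / m) (ha : ∀ u ∈ D, 0 < a u)
    (ha' : ∀ u ∈ D, HasDerivAt a (H u * a u) u) :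
    ConcaveOn ℝ D (fun u => a u ^ m⁻¹) := by
  have hD' : interior D ⊆ D := interior_subset
  have hq : ∀ u ∈ D, HasDerivAt (fun v => a v ^ m⁻¹) (m⁻¹ * H u * a u ^ m⁻¹) u :=
    fun u hu => (ha' u hu).rpow_const_of_eq_mul (ha u hu) m⁻¹
  have hq' : ∀ u ∈ D, HasDerivAt (fun v => m⁻¹ * H v * a v ^ m⁻¹)
      (m⁻¹ * H' u * a u ^ m⁻¹ + m⁻¹ * H u * (m⁻¹ * H u * a u ^ m⁻¹)) u :=
    fun u hu => ((hH u hu).const_mul m⁻¹).mul (hq u hu)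
  refine concaveOn_of_hasDerivWithinAt2_nonpos hD
    (fun u hu => (hq u hu).continuousAt.continuousWithinAt)
    (fun u hu => (hq u (hD' hu)).hasDerivWithinAt)
    (fun u hu => (hq' u (hD' hu)).hasDerivWithinAt) fun u hu => ?_
  have hriccati : H' u + m⁻¹ * H u ^ 2 ≤ 0 := by
    have := hH' u (hD' hu)
    rw [neg_div, div_eq_inv_mul] at this
    linarith
  have hpos : 0 ≤ m⁻¹ * a u ^ m⁻¹ := by
    have := ha u (hD' hu)
    positivity
  calc m⁻¹ * H' u * a u ^ m⁻¹ + m⁻¹ * H u * (m⁻¹ * H u * a u ^ m⁻¹)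
      = m⁻¹ * a u ^ m⁻¹ * (H' u + m⁻¹ * H u ^ 2) := by ring
    _ ≤ 0 := mul_nonpos_of_nonneg_of_nonpos hpos hriccati

theorem ConcaveOn.antitoneOn_div_of_nonneg {f : ℝ → ℝ} {s : ℝ} (hf : ConcaveOn ℝ (Ioc 0 s) f)
    (h0 : ∀ x ∈ Ioc 0 s, 0 ≤ f x) : AntitoneOn (fun x => f x / x) (Ioc 0 s) := by
  intro u hu v hv huv
  rcases huv.eq_or_lt with rfl | huv
  · rfl
  -- `f` need not be defined at `0`: compare with chords from `ε ∈ (0, u)` and let `ε → 0⁺`.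
  have hslope : ∀ ε ∈ Ioo 0 u, (f v - f u) / (v - u) ≤ f u / (u - ε) := fun ε hε =>
    calc (f v - f u) / (v - u) ≤ (f u - f ε) / (u - ε) :=
          hf.slope_anti_adjacent ⟨hε.1, hε.2.le.trans hu.2⟩ hv hε.2 huv
      _ ≤ f u / (u - ε) := by
          gcongr
          · linarith [hε.2]
          · linarith [h0 ε ⟨hε.1, hε.2.le.trans hu.2⟩]
  have hlim : Tendsto (fun ε => f u / (u - ε)) (𝓝[>] 0) (𝓝 (f u / (u - 0))) :=
    tendsto_nhdsWithin_of_tendsto_nhds <|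
      (continuousAt_const.div (continuousAt_const.sub continuousAt_id) (by simpa using hu.1.ne'))
  rw [sub_zero] at hlim
  have hslope0 : (f v - f u) / (v - u) ≤ f u / u :=
    ge_of_tendsto hlim <| (eventually_mem_nhdsWithin.and (Ioo_mem_nhdsGT hu.1)).mono
      fun ε hε => hslope ε hε.2
  rw [div_le_div_iff₀ (by linarith) hu.1] at hslope0
  show f v / v ≤ f u / u
  rw [div_le_div_iff₀ hv.1 hu.1]
  linarith

theorem antitoneOn_div_pow_of_concaveOn_rpow_inv {a : ℝ → ℝ} {s : ℝ} {m : ℕ} (hm : m ≠ 0)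
    (ha : ∀ u ∈ Ioc 0 s, 0 < a u) (hconc : ConcaveOn ℝ (Ioc 0 s) (fun u => a u ^ (m : ℝ)⁻¹)) :
    AntitoneOn (fun u => a u / u ^ m) (Ioc 0 s) := by
  have hroot : ∀ u ∈ Ioc 0 s, a u / u ^ m = (a u ^ (m : ℝ)⁻¹ / u) ^ m := fun u hu => by
    rw [div_pow, Real.rpow_inv_natCast_pow (ha u hu).le hm]
  have hroot_nonneg : ∀ u ∈ Ioc 0 s, 0 ≤ a u ^ (m : ℝ)⁻¹ := fun u hu =>
    Real.rpow_nonneg (ha u hu).le _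
  have hslope := hconc.antitoneOn_div_of_nonneg hroot_nonneg
  intro u hu v hv huv
  simp only [hroot u hu, hroot v hv]
  exact pow_le_pow_left₀ (div_nonneg (hroot_nonneg v hv) hv.1.le) (hslope hu hv huv) m

theorem AntitoneOn.exists_tendsto_nhdsGT_of_le {f : ℝ → ℝ} {x s C : ℝ} (hs : x < s)
    (hf : AntitoneOn f (Ioc x s)) (hC : ∀ u ∈ Ioc x s, f u ≤ C) :
    ∃ L, Tendsto f (𝓝[>] x) (𝓝 L) ∧ f s ≤ L ∧ L ≤ C := by
  have hIoo : Ioo x s ⊆ Ioc x s := Ioo_subset_Ioc_self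
  have hbdd : BddAbove (f '' Ioo x s) := ⟨C, by rintro _ ⟨u, hu, rfl⟩; exact hC u (hIoo hu)⟩
  have htend := (hf.mono hIoo).tendsto_nhdsWithin_Ioo_right (nonempty_Ioo.2 hs) hbdd
  have hnear : ∀ᶠ u in 𝓝[>] x, u ∈ Ioo x s := Ioo_mem_nhdsGT hs
  refine ⟨_, htend, ge_of_tendsto htend ?_, le_of_tendsto htend ?_⟩
  · exact hnear.mono fun u hu => hf (hIoo hu) (right_mem_Ioc.2 hs) hu.2.le
  · exact hnear.mono fun u hu => hC u (hIoo hu)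

theorem area_ratio_monotone_limit_general (n : ℕ) (hn : 2 ≤ n) (ustar C : ℝ)
    (hustar : 0 < ustar)
    (𝓗 𝓗' a : ℝ → ℝ)
    (h𝓗deriv : ∀ u ∈ Ioc (0 : ℝ) ustar, HasDerivAt 𝓗 (𝓗' u) u)
    (h𝓗ineq : ∀ u ∈ Ioc (0 : ℝ) ustar, 𝓗' u ≤ -(𝓗 u) ^ 2 / ((n : ℝ) - 1))
    (hapos : ∀ u ∈ Ioc (0 : ℝ) ustar, 0 < a u)
    (haderiv : ∀ u ∈ Ioc (0 : ℝ) ustar, HasDerivAt a (𝓗 u * a u) u)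
    (habound : ∀ u ∈ Ioc (0 : ℝ) ustar, a u ≤ C * u ^ (n - 1)) :
    AntitoneOn (fun u => a u / u ^ (n - 1)) (Ioc (0 : ℝ) ustar) ∧
    ∃ L : ℝ, Tendsto (fun u => a u / u ^ (n - 1)) (nhdsWithin 0 (Ioi (0 : ℝ))) (nhds L) ∧
      0 < a ustar / ustar ^ (n - 1) ∧ a ustar / ustar ^ (n - 1) ≤ L ∧ L ≤ C := by
  have hcast : ((n - 1 : ℕ) : ℝ) = (n : ℝ) - 1 := by rw [Nat.cast_sub (by omega), Nat.cast_one]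
  have hconc := concaveOn_rpow_inv_of_riccati (convex_Ioc 0 ustar) (m := ((n - 1 : ℕ) : ℝ))
    (by rw [hcast]; linarith [show (2 : ℝ) ≤ n by exact_mod_cast hn]) h𝓗deriv
    (by rwa [hcast]) hapos haderiv
  have hanti := antitoneOn_div_pow_of_concaveOn_rpow_inv (by omega) hapos hconc
  obtain ⟨L, hL, hstarL, hLC⟩ := hanti.exists_tendsto_nhdsGT_of_le hustar
    fun u hu => (div_le_iff₀ (pow_pos hu.1 _)).2 (habound u hu)
  exact ⟨hanti, L, hL, div_pos (hapos ustar ⟨hustar, le_rfl⟩) (pow_pos hustar _), hstarL, hLC⟩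

/-- Monotonicity and convergence of the area ratio `u^{1-n}·a(u)` for the CMC
foliation: if `𝓗' ≤ -𝓗²/(n-1)`, `a > 0`, `a' = 𝓗·a`, and `a(u) ≤ C·u^{n-1}`,
then `u ↦ a(u)/u^{n-1}` is non-increasing on `(0,u*]` and converges as `u → 0⁺`
to a finite limit `L` with `0 < a(u*)/u*^{n-1} ≤ L ≤ C`. -/
theorem area_ratio_monotone_limit (n : ℕ) (hn : 2 ≤ n) (ustar C : ℝ)
    (hustar : 0 < ustar) (hC : 0 < C)
    (𝓗 𝓗' a : ℝ → ℝ)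
    (h𝓗deriv : ∀ u ∈ Ioc (0 : ℝ) ustar, HasDerivAt 𝓗 (𝓗' u) u)
    (h𝓗ineq : ∀ u ∈ Ioc (0 : ℝ) ustar, 𝓗' u ≤ -(𝓗 u) ^ 2 / ((n : ℝ) - 1))
    (hapos : ∀ u ∈ Ioc (0 : ℝ) ustar, 0 < a u)
    (haderiv : ∀ u ∈ Ioc (0 : ℝ) ustar, HasDerivAt a (𝓗 u * a u) u)
    (habound : ∀ u ∈ Ioc (0 : ℝ) ustar, a u ≤ C * u ^ (n - 1)) :
    AntitoneOn (fun u => a u / u ^ (n - 1)) (Ioc (0 : ℝ) ustar) ∧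
    ∃ L : ℝ, Tendsto (fun u => a u / u ^ (n - 1)) (nhdsWithin 0 (Ioi (0 : ℝ))) (nhds L) ∧
      0 < a ustar / ustar ^ (n - 1) ∧ a ustar / ustar ^ (n - 1) ≤ L ∧ L ≤ C :=
  area_ratio_monotone_limit_general n hn ustar C hustar 𝓗 𝓗' a h𝓗deriv h𝓗ineq hapos haderiv habound
end

section
/- Let n ≥ 2 be an integer, let Λ > 0, ℓ > 0, and 0 < r₀ ≤ ℓ/2. Let R : [0,ℓ] → ℝ be a continuous function with R(s) ≤ Λ² for all s ∈ [0,ℓ]. Assume the inequality 0 ≤ ∫₀^{r₀} ((n−1)/r₀² − (s²/r₀²)·R(s)) ds − ∫_{r₀}^{ℓ−r₀} R(s) ds + ∫_{ℓ−r₀}^{ℓ} ((n−1)/r₀² − ((ℓ−s)²/r₀²)·R(s)) ds. Then ∫₀^{ℓ} R(s) ds ≤ 2(n−1)/r₀ + (4/3)·Λ²·r₀. -/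
open Set intervalIntegral

/-!
Split `[0, ℓ]` at `r₀` and `ℓ - r₀`. The hypothesis bounds the middle integral by the two boundary
terms, so on each boundary piece `R` only enters with the nonnegative weight `1 - (s/r₀)²`, where `s`
is the distance to the endpoint. Bounding `R ≤ Λ²` there gives `(n-1)/r₀ + (2/3)Λ²r₀` per piece,
since `∫₀^{r₀} (1 - s²/r₀²) ds = 2r₀/3`.
-/

theorem integral_add_integral_quadratic_cutoff_left_le {R : ℝ → ℝ} {c M r : ℝ} (hr : 0 < r)
    (hRint : IntervalIntegrable R MeasureTheory.volume 0 r) (hRM : ∀ s ∈ Icc 0 r, R s ≤ M) :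
    (∫ s in (0 : ℝ)..r, R s) + ∫ s in (0 : ℝ)..r, (c / r ^ 2 - s ^ 2 / r ^ 2 * R s)
      ≤ c / r + 2 / 3 * M * r := by
  have hweighted : IntervalIntegrable (fun s => s ^ 2 / r ^ 2 * R s) MeasureTheory.volume 0 r :=
    hRint.continuousOn_mul (by fun_prop)
  rw [← integral_add hRint (intervalIntegrable_const.sub hweighted)]
  calc (∫ s in (0 : ℝ)..r, (R s + (c / r ^ 2 - s ^ 2 / r ^ 2 * R s)))
      ≤ ∫ s in (0 : ℝ)..r, (c / r ^ 2 + M - M / r ^ 2 * s ^ 2) := by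
        refine integral_mono_on hr.le (hRint.add (intervalIntegrable_const.sub hweighted))
          (Continuous.intervalIntegrable (by fun_prop) _ _) fun s hs => ?_
        have hweight : 0 ≤ 1 - s ^ 2 / r ^ 2 := by
          rw [sub_nonneg, div_le_one (by positivity)]
          nlinarith [hs.1, hs.2]
        have := mul_le_mul_of_nonneg_left (hRM s hs) hweight
        linarith [show M / r ^ 2 * s ^ 2 = s ^ 2 / r ^ 2 * M by ring]
    _ = c / r + 2 / 3 * M * r := by
        rw [integral_sub intervalIntegrable_const
          (Continuous.intervalIntegrable (by fun_prop) _ _), integral_const_mul, integral_pow,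
          integral_const, smul_eq_mul]
        field_simp
        ring

theorem integral_add_integral_quadratic_cutoff_right_le {R : ℝ → ℝ} {c M ℓ r : ℝ} (hr : 0 < r)
    (hRint : IntervalIntegrable R MeasureTheory.volume (ℓ - r) ℓ)
    (hRM : ∀ s ∈ Icc (ℓ - r) ℓ, R s ≤ M) :
    (∫ s in (ℓ - r)..ℓ, R s) + ∫ s in (ℓ - r)..ℓ, (c / r ^ 2 - (ℓ - s) ^ 2 / r ^ 2 * R s)
      ≤ c / r + 2 / 3 * M * r := by
  have hreflect (g : ℝ → ℝ) : ∫ s in (ℓ - r)..ℓ, g s = ∫ s in (0 : ℝ)..r, g (ℓ - s) := by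
    rw [integral_comp_sub_left, sub_zero]
  rw [hreflect R, hreflect fun s => c / r ^ 2 - (ℓ - s) ^ 2 / r ^ 2 * R s]
  simp only [sub_sub_cancel]
  exact integral_add_integral_quadratic_cutoff_left_le (R := fun s => R (ℓ - s)) hr
    (by simpa using (hRint.comp_sub_left ℓ).symm)
    fun s hs => hRM _ ⟨by linarith [hs.2], by linarith [hs.1]⟩

theorem second_variation_ricci_bound_general (n : ℕ)
    (Λ ℓ r₀ : ℝ) (hr₀ : 0 < r₀) (hr₀ℓ : r₀ ≤ ℓ / 2)
    (R : ℝ → ℝ) (hRcont : ContinuousOn R (Icc 0 ℓ))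
    (hRbound : ∀ s ∈ Icc (0 : ℝ) ℓ, R s ≤ Λ ^ 2)
    (hineq : 0 ≤ (∫ s in (0 : ℝ)..r₀, (((n : ℝ) - 1) / r₀ ^ 2 - s ^ 2 / r₀ ^ 2 * R s))
        - (∫ s in r₀..(ℓ - r₀), R s)
        + ∫ s in (ℓ - r₀)..ℓ, (((n : ℝ) - 1) / r₀ ^ 2 - (ℓ - s) ^ 2 / r₀ ^ 2 * R s)) :
    (∫ s in (0 : ℝ)..ℓ, R s) ≤ 2 * ((n : ℝ) - 1) / r₀ + (4 / 3) * Λ ^ 2 * r₀ := by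
  have hRint : ∀ a b, 0 ≤ a → a ≤ b → b ≤ ℓ → IntervalIntegrable R MeasureTheory.volume a b :=
    fun a b ha hab hb =>
      (hRcont.mono (by rw [uIcc_of_le hab]; exact Icc_subset_Icc ha hb)).intervalIntegrable
  have hsplit : (∫ s in (0 : ℝ)..ℓ, R s) = (∫ s in (0 : ℝ)..r₀, R s)
      + (∫ s in r₀..(ℓ - r₀), R s) + ∫ s in (ℓ - r₀)..ℓ, R s := by
    rw [integral_add_adjacent_intervals (hRint _ _ le_rfl hr₀.le (by linarith))
        (hRint _ _ hr₀.le (by linarith) (by linarith)),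
      integral_add_adjacent_intervals (hRint _ _ le_rfl (by linarith) (by linarith))
        (hRint _ _ (by linarith) (by linarith) le_rfl)]
  have hleft := integral_add_integral_quadratic_cutoff_left_le (c := (n : ℝ) - 1) hr₀
    (hRint _ _ le_rfl hr₀.le (by linarith)) fun s hs => hRbound s ⟨hs.1, by linarith [hs.2]⟩
  have hright := integral_add_integral_quadratic_cutoff_right_le (c := (n : ℝ) - 1) hr₀
    (hRint _ _ (by linarith) (by linarith) le_rfl)
    fun s hs => hRbound s ⟨by linarith [hs.1], hs.2⟩
  rw [hsplit]
  linarith [show 2 * ((n : ℝ) - 1) / r₀ = ((n : ℝ) - 1) / r₀ + ((n : ℝ) - 1) / r₀ by ring]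

/-- Perelman's second variation argument: if `R ≤ Λ²` on `[0,ℓ]` and the second
variation integral inequality holds for the piecewise linear cutoff supported at
scale `r₀`, then `∫₀^ℓ R ≤ 2(n-1)/r₀ + (4/3)Λ²r₀`. -/
theorem second_variation_ricci_bound (n : ℕ) (hn : 2 ≤ n)
    (Λ ℓ r₀ : ℝ) (hΛ : 0 < Λ) (hℓ : 0 < ℓ) (hr₀ : 0 < r₀) (hr₀ℓ : r₀ ≤ ℓ / 2)
    (R : ℝ → ℝ) (hRcont : ContinuousOn R (Icc 0 ℓ))
    (hRbound : ∀ s ∈ Icc (0 : ℝ) ℓ, R s ≤ Λ ^ 2)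
    (hineq : 0 ≤ (∫ s in (0 : ℝ)..r₀, (((n : ℝ) - 1) / r₀ ^ 2 - s ^ 2 / r₀ ^ 2 * R s))
        - (∫ s in r₀..(ℓ - r₀), R s)
        + ∫ s in (ℓ - r₀)..ℓ, (((n : ℝ) - 1) / r₀ ^ 2 - (ℓ - s) ^ 2 / r₀ ^ 2 * R s)) :
    (∫ s in (0 : ℝ)..ℓ, R s) ≤ 2 * ((n : ℝ) - 1) / r₀ + (4 / 3) * Λ ^ 2 * r₀ :=
  second_variation_ricci_bound_general n Λ ℓ r₀ hr₀ hr₀ℓ R hRcont hRbound hineq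
end

section
/- Let N ≥ 1 be an integer and κ > 0, and let c : [0,1] → ℝ^N be a twice continuously differentiable curve with c(1) = c(0) and ‖c'(t)‖² ≥ κ for all t ∈ [0,1]. Then there exists t₀ ∈ (0,1) such that ⟨c''(t₀), c(t₀) − c(0)⟩ ≤ −κ; in particular, ‖c''(t₀)‖ · ‖c(t₀) − c(0)‖ ≥ κ. -/
/-!
The function `f t = ‖c t - c 0‖²` vanishes at both endpoints and is not identically zero, because
`c` has nonzero velocity. Hence `f` attains its maximum at an interior point `t₀`, where
`f''(t₀) / 2 = ⟪c''(t₀), c(t₀) - c(0)⟫ + ‖c'(t₀)‖² ≤ 0`; the speed bound and Cauchy–Schwarz finish.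
-/

open Set Filter Topology

theorem IsLocalMax.second_deriv_nonpos {f f' : ℝ → ℝ} {f'' x₀ : ℝ} (h : IsLocalMax f x₀)
    (hf : ∀ᶠ x in 𝓝 x₀, HasDerivAt f (f' x) x) (hf' : HasDerivAt f' f'' x₀) : f'' ≤ 0 := by
  by_contra! hpos
  have hderiv : deriv (deriv f) x₀ = f'' :=
    (hf'.congr_of_eventuallyEq (hf.mono fun x hx => hx.deriv)).deriv
  -- By the second derivative test `x₀` is also a local minimum, so `f` is locally constant.
  have hmin : IsLocalMin f x₀ := isLocalMin_of_deriv_deriv_pos (hderiv ▸ hpos)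
    h.deriv_eq_zero hf.self_of_nhds.continuousAt
  have hconst : f =ᶠ[𝓝 x₀] fun _ => f x₀ :=
    (hmin.and h).mono fun x hx => le_antisymm hx.2 hx.1
  have hzero : deriv (deriv f) x₀ = 0 := by simp [hconst.deriv.deriv_eq]
  linarith

theorem IsLocalMax.inner_add_norm_sq_nonpos {E : Type*} [NormedAddCommGroup E]
    [InnerProductSpace ℝ E] {γ γ' : ℝ → E} {γ'' : E} {t₀ : ℝ}
    (h : IsLocalMax (‖γ ·‖ ^ 2) t₀) (hγ : ∀ᶠ t in 𝓝 t₀, HasDerivAt γ (γ' t) t)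
    (hγ' : HasDerivAt γ' γ'' t₀) :
    inner ℝ γ'' (γ t₀) + ‖γ' t₀‖ ^ 2 ≤ 0 := by
  have hsecond := h.second_deriv_nonpos (hγ.mono fun t ht => ht.norm_sq)
    ((hγ.self_of_nhds.inner ℝ hγ').const_mul 2)
  rw [real_inner_self_eq_norm_sq, real_inner_comm] at hsecond
  linarith

theorem HasDerivAt.exists_mem_ne {𝕜 F : Type*} [NontriviallyNormedField 𝕜]
    [NormedAddCommGroup F] [NormedSpace 𝕜 F] {γ : 𝕜 → F} {v : F} {t : 𝕜} {s : Set 𝕜}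
    (hγ : HasDerivAt γ v t) (hv : v ≠ 0) (hs : s ∈ 𝓝 t) (y : F) : ∃ x ∈ s, γ x ≠ y :=
  let ⟨x, hne, hx⟩ := ((hγ.eventually_ne hv).and (mem_nhdsWithin_of_mem_nhds hs)).exists
  ⟨x, hx, hne⟩

theorem exists_mem_Ioo_isLocalMax {α β : Type*} [ConditionallyCompleteLinearOrder α]
    [TopologicalSpace α] [OrderTopology α] [LinearOrder β] [TopologicalSpace β]
    [ClosedIciTopology β] {f : α → β} {a b t : α} (hab : a ≤ b)
    (hf : ContinuousOn f (Icc a b)) (ht : t ∈ Icc a b) (ha : f a < f t) (hb : f b < f t) :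
    ∃ t₀ ∈ Ioo a b, IsLocalMax f t₀ := by
  refine isCompact_Icc.exists_isLocalMax_mem_open Ioo_subset_Icc_self hf ht ?_ isOpen_Ioo
  rw [Icc_sdiff_Ioo_same hab]
  rintro x (rfl | rfl) <;> assumption

theorem closed_curve_interior_max_general (N : ℕ) (κ : ℝ) (hκ : 0 < κ)
    (c c' c'' : ℝ → EuclideanSpace ℝ (Fin N))
    (hc : ∀ t ∈ Icc (0 : ℝ) 1, HasDerivAt c (c' t) t)
    (hc' : ∀ t ∈ Icc (0 : ℝ) 1, HasDerivAt c' (c'' t) t)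
    (hclosed : c 1 = c 0)
    (hspeed : ∀ t ∈ Icc (0 : ℝ) 1, κ ≤ ‖c' t‖ ^ 2) :
    ∃ t₀ ∈ Ioo (0 : ℝ) 1,
      (inner ℝ (c'' t₀) (c t₀ - c 0) : ℝ) ≤ -κ ∧
      κ ≤ ‖c'' t₀‖ * ‖c t₀ - c 0‖ := by
  set f : ℝ → ℝ := fun t => ‖c t - c 0‖ ^ 2
  have hmid : (1 / 2 : ℝ) ∈ Ioo 0 1 := by norm_num
  have hc'_ne : c' (1 / 2) ≠ 0 := fun h0 => by
    have hpos := hκ.trans_le (hspeed _ (Ioo_subset_Icc_self hmid))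
    rw [h0] at hpos
    simp at hpos
  obtain ⟨t₁, ht₁, hne⟩ := (hc _ (Ioo_subset_Icc_self hmid)).exists_mem_ne hc'_ne
    (Icc_mem_nhds hmid.1 hmid.2) (c 0)
  have hft₁ : 0 < f t₁ := pow_pos (norm_pos_iff.mpr (sub_ne_zero.mpr hne)) 2
  obtain ⟨t₀, ht₀, hmax⟩ := exists_mem_Ioo_isLocalMax zero_le_one
    (fun t ht => ((hc t ht).sub_const (c 0)).norm_sq.continuousAt.continuousWithinAt) ht₁
    (by simpa [f] using hft₁) (by simpa [f, hclosed] using hft₁)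
  have hnear : ∀ᶠ t in 𝓝 t₀, t ∈ Icc (0 : ℝ) 1 := Icc_mem_nhds ht₀.1 ht₀.2
  have hsecond := hmax.inner_add_norm_sq_nonpos (γ := fun t => c t - c 0)
    (hnear.mono fun t ht => (hc t ht).sub_const (c 0)) (hc' t₀ (Ioo_subset_Icc_self ht₀))
  have hinner : inner ℝ (c'' t₀) (c t₀ - c 0) ≤ -κ := by
    linarith [hspeed t₀ (Ioo_subset_Icc_self ht₀)]
  refine ⟨t₀, ht₀, hinner, ?_⟩
  calc κ ≤ -inner ℝ (c'' t₀) (c t₀ - c 0) := by linarith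
    _ ≤ |inner ℝ (c'' t₀) (c t₀ - c 0)| := neg_le_abs _
    _ ≤ ‖c'' t₀‖ * ‖c t₀ - c 0‖ := abs_real_inner_le_norm _ _

/-- Interior maximum argument for closed curves with speed bounded below: if
`c : [0,1] → ℝ^N` is `C²` with `c(1) = c(0)` and `‖c'(t)‖² ≥ κ > 0`, then at some
interior point `t₀` one has `⟨c''(t₀), c(t₀) - c(0)⟩ ≤ -κ`; in particular
`‖c''(t₀)‖·‖c(t₀)-c(0)‖ ≥ κ`. -/
theorem closed_curve_interior_max (N : ℕ) (hN : 1 ≤ N) (κ : ℝ) (hκ : 0 < κ)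
    (c c' c'' : ℝ → EuclideanSpace ℝ (Fin N))
    (hc : ∀ t ∈ Icc (0 : ℝ) 1, HasDerivAt c (c' t) t)
    (hc' : ∀ t ∈ Icc (0 : ℝ) 1, HasDerivAt c' (c'' t) t)
    (hc'' : ContinuousOn c'' (Icc (0 : ℝ) 1))
    (hclosed : c 1 = c 0)
    (hspeed : ∀ t ∈ Icc (0 : ℝ) 1, κ ≤ ‖c' t‖ ^ 2) :
    ∃ t₀ ∈ Ioo (0 : ℝ) 1,
      (inner ℝ (c'' t₀) (c t₀ - c 0) : ℝ) ≤ -κ ∧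
      κ ≤ ‖c'' t₀‖ * ‖c t₀ - c 0‖ :=
  closed_curve_interior_max_general N κ hκ c c' c'' hc hc' hclosed hspeed
end

section
/- Let n, m ≥ 1 be integers, Λ > 0, r > 0, and let f : ℝⁿ → ℝᵐ (with Euclidean norms) be twice continuously differentiable on the open ball B(0,r) with Df(0) = 0. Suppose that ‖D²f(x)‖ ≤ (1 + ‖Df(x)‖²)^{3/2} · Λ for all x ∈ B(0,r), where ‖Df(x)‖ and ‖D²f(x)‖ denote the operator norms of the first and second Fréchet derivatives. Then ‖Df(x)‖² / (1 + ‖Df(x)‖²) ≤ Λ² · ‖x‖² for all x ∈ B(0,r). -/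
/-!
Along the ray `t ↦ t • x` the curve `g t = Df(t x)` satisfies `‖g'‖ ≤ Λ‖x‖ (1 + ‖g‖²)^{3/2}`,
i.e. `‖g‖ / √(1 + ‖g‖²)` grows at most at rate `Λ‖x‖`. This is made rigorous by comparing `‖g‖`
with the explicit solution of `y' = v (1 + y²)^{3/2}`, `y(0) = 0`, for every `v > Λ‖x‖`
(the comparison principle needs the strict inequality), and letting `v ↓ Λ‖x‖`.
-/

open Set Metric

/-- The solution of `y' = v (1 + y²)^{3/2}`, `y(0) = 0`, namely `y / √(1 + y²) = v t`. -/
noncomputable def barrier (v t : ℝ) : ℝ := v * t / √(1 - (v * t) ^ 2)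

section barrier

variable {v t : ℝ}

lemma one_add_barrier_sq (h : (v * t) ^ 2 < 1) :
    1 + barrier v t ^ 2 = (1 - (v * t) ^ 2)⁻¹ := by
  rw [barrier, div_pow, Real.sq_sqrt (by linarith)]
  generalize (v * t) ^ 2 = u at *
  field_simp [show 1 - u ≠ 0 by linarith]
  ring

lemma barrier_sq_div_one_add_barrier_sq (h : (v * t) ^ 2 < 1) :
    barrier v t ^ 2 / (1 + barrier v t ^ 2) = (v * t) ^ 2 := by
  rw [one_add_barrier_sq h, barrier, div_pow, Real.sq_sqrt (by linarith)]
  generalize (v * t) ^ 2 = u at *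
  field_simp [show 1 - u ≠ 0 by linarith]

lemma one_add_barrier_sq_rpow (h : (v * t) ^ 2 < 1) :
    (1 + barrier v t ^ 2) ^ ((3 : ℝ) / 2) = (√(1 - (v * t) ^ 2) ^ 3)⁻¹ := by
  have hs : 0 ≤ 1 - (v * t) ^ 2 := by linarith
  rw [one_add_barrier_sq h, Real.inv_rpow hs, Real.sqrt_eq_rpow, ← Real.rpow_mul_natCast hs]
  norm_num

lemma hasDerivAt_barrier (h : (v * t) ^ 2 < 1) :
    HasDerivAt (barrier v) (v * (1 + barrier v t ^ 2) ^ ((3 : ℝ) / 2)) t := by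
  have hs : 0 < 1 - (v * t) ^ 2 := by linarith
  have hsqrt : HasDerivAt (fun s => √(1 - (v * s) ^ 2))
      (-(2 * v ^ 2 * t) / (2 * √(1 - (v * t) ^ 2))) t := by
    refine HasDerivAt.sqrt
      ((((hasDerivAt_id t).const_mul v).pow 2).const_sub 1 |>.congr_deriv ?_) hs.ne'
    simp only [id]; ring
  refine (((hasDerivAt_id t).const_mul v).div hsqrt (Real.sqrt_pos.2 hs).ne').congr_deriv ?_
  rw [one_add_barrier_sq_rpow h]
  have hsq := Real.sq_sqrt hs.le
  have hS := (Real.sqrt_pos.2 hs).ne'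
  generalize √(1 - (v * t) ^ 2) = S at *
  field_simp
  rw [hsq, id]
  ring

end barrier

lemma sq_div_one_add_sq_le_sq_div_one_add_sq {a b : ℝ} (ha : 0 ≤ a) (hab : a ≤ b) :
    a ^ 2 / (1 + a ^ 2) ≤ b ^ 2 / (1 + b ^ 2) := by
  rw [div_le_div_iff₀ (by positivity) (by positivity)]
  nlinarith [mul_le_mul hab hab ha (ha.trans hab)]

section curve

variable {E : Type*} [NormedAddCommGroup E] [NormedSpace ℝ E] {g g' : ℝ → E} {w : ℝ}

theorem norm_le_barrier_of_norm_deriv_le (hg : ContinuousOn g (Icc 0 1))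
    (hg' : ∀ t ∈ Ico (0 : ℝ) 1, HasDerivWithinAt g (g' t) (Ici t) t) (hg0 : g 0 = 0)
    (bound : ∀ t ∈ Ico (0 : ℝ) 1, ‖g' t‖ ≤ w * (1 + ‖g t‖ ^ 2) ^ ((3 : ℝ) / 2))
    {v : ℝ} (hwv : w < v) (hv0 : 0 < v) (hv1 : v < 1) : ‖g 1‖ ≤ barrier v 1 := by
  have hvt : ∀ t ∈ Icc (0 : ℝ) 1, (v * t) ^ 2 < 1 := fun t ht =>
    pow_lt_one₀ (by nlinarith [ht.1]) (by nlinarith [ht.2]) two_ne_zero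
  refine image_norm_le_of_norm_deriv_right_lt_deriv_boundary' hg hg' (by simp [hg0, barrier])
    (fun t ht => (hasDerivAt_barrier (hvt t ht)).continuousAt.continuousWithinAt)
    (fun t ht => (hasDerivAt_barrier (hvt t (Ico_subset_Icc_self ht))).hasDerivWithinAt)
    (fun t ht hgt => ?_) (right_mem_Icc.2 zero_le_one)
  calc ‖g' t‖ ≤ w * (1 + ‖g t‖ ^ 2) ^ ((3 : ℝ) / 2) := bound t ht
    _ < v * (1 + barrier v t ^ 2) ^ ((3 : ℝ) / 2) := by
      rw [hgt]; exact mul_lt_mul_of_pos_right hwv (by positivity)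

theorem sq_norm_div_one_add_sq_norm_le_of_norm_deriv_le (hg : ContinuousOn g (Icc 0 1))
    (hg' : ∀ t ∈ Ico (0 : ℝ) 1, HasDerivWithinAt g (g' t) (Ici t) t) (hg0 : g 0 = 0)
    (bound : ∀ t ∈ Ico (0 : ℝ) 1, ‖g' t‖ ≤ w * (1 + ‖g t‖ ^ 2) ^ ((3 : ℝ) / 2)) :
    ‖g 1‖ ^ 2 / (1 + ‖g 1‖ ^ 2) ≤ w ^ 2 := by
  have hw : 0 ≤ w := by
    simpa [hg0] using (norm_nonneg _).trans (bound 0 ⟨le_rfl, zero_lt_one⟩)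
  refine le_of_forall_gt_imp_ge_of_dense fun c hc => ?_
  rcases le_or_gt 1 c with hc1 | hc1
  · exact ((div_lt_one (by positivity)).2 (lt_one_add _)).le.trans hc1
  have hc0 : 0 ≤ c := (sq_nonneg w).trans hc.le
  have hwv : w < √c := (Real.lt_sqrt hw).2 hc
  have hv1 : √c < 1 := (Real.sqrt_lt' one_pos).2 (by simpa using hc1)
  have hv : (√c * 1) ^ 2 < 1 := by rwa [mul_one, Real.sq_sqrt hc0]
  calc ‖g 1‖ ^ 2 / (1 + ‖g 1‖ ^ 2) ≤ barrier √c 1 ^ 2 / (1 + barrier √c 1 ^ 2) :=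
        sq_div_one_add_sq_le_sq_div_one_add_sq (norm_nonneg _)
          (norm_le_barrier_of_norm_deriv_le hg hg' hg0 bound hwv (hw.trans_lt hwv) hv1)
    _ = c := by rw [barrier_sq_div_one_add_barrier_sq hv, mul_one, Real.sq_sqrt hc0]

end curve

theorem ContDiffOn.hasDerivAt_fderiv_smul {E F : Type*} [NormedAddCommGroup E]
    [NormedSpace ℝ E] [NormedAddCommGroup F] [NormedSpace ℝ F] {f : E → F} {s : Set E}
    (hf : ContDiffOn ℝ 2 f s) (hs : IsOpen s) {x : E} {t : ℝ} (ht : t • x ∈ s) :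
    HasDerivAt (fun τ : ℝ => fderiv ℝ f (τ • x)) (fderiv ℝ (fderiv ℝ f) (t • x) x) t := by
  have hDf : HasFDerivAt (fderiv ℝ f) (fderiv ℝ (fderiv ℝ f) (t • x)) (t • x) :=
    (((hf.fderiv_of_isOpen hs (by norm_num)).differentiableOn one_ne_zero).differentiableAt
      (hs.mem_nhds ht)).hasFDerivAt
  exact hDf.comp_hasDerivAt t (by simpa using (hasDerivAt_id t).smul_const x)

theorem graphical_slope_estimate_general (n m : ℕ)
    (Λ r : ℝ)
    (f : EuclideanSpace ℝ (Fin n) → EuclideanSpace ℝ (Fin m))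
    (hf : ContDiffOn ℝ 2 f (ball (0 : EuclideanSpace ℝ (Fin n)) r))
    (hDf0 : fderiv ℝ f 0 = 0)
    (hD2f : ∀ x ∈ ball (0 : EuclideanSpace ℝ (Fin n)) r,
      ‖fderiv ℝ (fderiv ℝ f) x‖ ≤ (1 + ‖fderiv ℝ f x‖ ^ 2) ^ ((3 : ℝ) / 2) * Λ) :
    ∀ x ∈ ball (0 : EuclideanSpace ℝ (Fin n)) r,
      ‖fderiv ℝ f x‖ ^ 2 / (1 + ‖fderiv ℝ f x‖ ^ 2) ≤ Λ ^ 2 * ‖x‖ ^ 2 := by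
  intro x hx
  have hray : ∀ t ∈ Icc (0 : ℝ) 1, t • x ∈ ball (0 : EuclideanSpace ℝ (Fin n)) r := fun t ht =>
    (convex_ball 0 r).smul_mem_of_zero_mem (mem_ball_self (pos_of_mem_ball hx)) hx ht
  have hderiv := fun t ht => hf.hasDerivAt_fderiv_smul isOpen_ball (hray t ht)
  have hbound : ∀ t ∈ Ico (0 : ℝ) 1, ‖fderiv ℝ (fderiv ℝ f) (t • x) x‖ ≤
      Λ * ‖x‖ * (1 + ‖fderiv ℝ f (t • x)‖ ^ 2) ^ ((3 : ℝ) / 2) := fun t ht => calc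
    _ ≤ ‖fderiv ℝ (fderiv ℝ f) (t • x)‖ * ‖x‖ := ContinuousLinearMap.le_opNorm _ x
    _ ≤ (1 + ‖fderiv ℝ f (t • x)‖ ^ 2) ^ ((3 : ℝ) / 2) * Λ * ‖x‖ := by
      gcongr; exact hD2f _ (hray t (Ico_subset_Icc_self ht))
    _ = Λ * ‖x‖ * (1 + ‖fderiv ℝ f (t • x)‖ ^ 2) ^ ((3 : ℝ) / 2) := by ring
  simpa [mul_pow] using sq_norm_div_one_add_sq_norm_le_of_norm_deriv_le
    (fun t ht => (hderiv t ht).continuousAt.continuousWithinAt)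
    (fun t ht => (hderiv t (Ico_subset_Icc_self ht)).hasDerivWithinAt)
    (by simpa using hDf0) hbound

/-- Graphical slope estimate: if `f : ℝⁿ → ℝᵐ` is `C²` on `B(0,r)` with `Df(0) = 0`
and `‖D²f(x)‖ ≤ (1 + ‖Df(x)‖²)^{3/2}·Λ` on `B(0,r)`, then
`‖Df(x)‖²/(1 + ‖Df(x)‖²) ≤ Λ²‖x‖²` on `B(0,r)`. -/
theorem graphical_slope_estimate (n m : ℕ) (hn : 1 ≤ n) (hm : 1 ≤ m)
    (Λ r : ℝ) (hΛ : 0 < Λ) (hr : 0 < r)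
    (f : EuclideanSpace ℝ (Fin n) → EuclideanSpace ℝ (Fin m))
    (hf : ContDiffOn ℝ 2 f (ball (0 : EuclideanSpace ℝ (Fin n)) r))
    (hDf0 : fderiv ℝ f 0 = 0)
    (hD2f : ∀ x ∈ ball (0 : EuclideanSpace ℝ (Fin n)) r,
      ‖fderiv ℝ (fderiv ℝ f) x‖ ≤ (1 + ‖fderiv ℝ f x‖ ^ 2) ^ ((3 : ℝ) / 2) * Λ) :
    ∀ x ∈ ball (0 : EuclideanSpace ℝ (Fin n)) r,
      ‖fderiv ℝ f x‖ ^ 2 / (1 + ‖fderiv ℝ f x‖ ^ 2) ≤ Λ ^ 2 * ‖x‖ ^ 2 :=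
  graphical_slope_estimate_general n m Λ r f hf hDf0 hD2f
end

section
/- Let Λ > 0 and T > 0, and let μ : [0,T] → ℝ be a differentiable function with μ(0) = 0, μ(t) ≥ 0 for all t, and μ'(t) ≤ 2Λ·(1 + μ(t))^{3/2}·μ(t)^{1/2} for all t ∈ [0,T]. Then μ(t)/(1 + μ(t)) ≤ Λ²·t² for all t ∈ [0,T]. -/
/-!
Write `v = μ / (1 + μ)`. The bound on `μ'` is exactly `v' ≤ 2Λ √v`, i.e. `(√v)' ≤ Λ`, so integrating
from `v(0) = 0` gives `√v(t) ≤ Λ t`. Since `√v` need not be differentiable where `v = 0`, the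
comparison is run for `√(v + ε²)` instead and `ε → 0` at the end.
-/

open Set

section SqrtComparison

variable {v v' : ℝ → ℝ} {Λ a b : ℝ}

theorem sqrt_add_sq_le_of_deriv_le_two_mul_sqrt (hΛ : 0 ≤ Λ)
    (hv : ∀ x ∈ Icc a b, HasDerivAt v (v' x) x) (hva : v a = 0)
    (hv_nonneg : ∀ x ∈ Icc a b, 0 ≤ v x) (hv' : ∀ x ∈ Icc a b, v' x ≤ 2 * Λ * √(v x))
    {ε : ℝ} (hε : 0 < ε) {x : ℝ} (hx : x ∈ Icc a b) :
    √(v x + ε ^ 2) ≤ ε + Λ * (x - a) := by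
  have hpos : ∀ y ∈ Icc a b, 0 < v y + ε ^ 2 := fun y hy => by
    have := hv_nonneg y hy; positivity
  have hderiv : ∀ y ∈ Icc a b,
      HasDerivAt (fun y => √(v y + ε ^ 2)) (v' y / (2 * √(v y + ε ^ 2))) y := fun y hy =>
    ((hv y hy).add_const _).sqrt (hpos y hy).ne'
  have hB : ∀ y, HasDerivAt (fun y => ε + Λ * (y - a)) Λ y := fun y => by
    simpa using ((hasDerivAt_id y).sub_const a).const_mul Λ |>.const_add ε
  refine image_le_of_deriv_right_le_deriv_boundary
    (fun y hy => (hderiv y hy).continuousAt.continuousWithinAt)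
    (fun y hy => (hderiv y (Ico_subset_Icc_self hy)).hasDerivWithinAt)
    (by simp [hva, hε.le])
    (fun y _ => (hB y).continuousAt.continuousWithinAt)
    (fun y _ => (hB y).hasDerivWithinAt) (fun y hy => ?_) hx
  have hy := Ico_subset_Icc_self hy
  have hsqrt_pos := Real.sqrt_pos.2 (hpos y hy)
  rw [div_le_iff₀ (by positivity)]
  calc v' y ≤ 2 * Λ * √(v y) := hv' y hy
    _ ≤ 2 * Λ * √(v y + ε ^ 2) := by gcongr; nlinarith
    _ = Λ * (2 * √(v y + ε ^ 2)) := by ring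

theorem le_sq_of_deriv_le_two_mul_sqrt (hΛ : 0 ≤ Λ)
    (hv : ∀ x ∈ Icc a b, HasDerivAt v (v' x) x) (hva : v a = 0)
    (hv_nonneg : ∀ x ∈ Icc a b, 0 ≤ v x) (hv' : ∀ x ∈ Icc a b, v' x ≤ 2 * Λ * √(v x))
    {x : ℝ} (hx : x ∈ Icc a b) :
    v x ≤ (Λ * (x - a)) ^ 2 := by
  set c := Λ * (x - a)
  have hc : 0 ≤ c := mul_nonneg hΛ (sub_nonneg.2 hx.1)
  have hv_le : ∀ ε > 0, v x ≤ c ^ 2 + (2 * c + 1) * ε := fun ε hε => by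
    have h := sqrt_add_sq_le_of_deriv_le_two_mul_sqrt hΛ hv hva hv_nonneg hv' hε hx
    rw [Real.sqrt_le_left (by positivity)] at h
    nlinarith
  refine le_of_forall_pos_le_add fun δ hδ => ?_
  have hδ' : 0 < δ / (2 * c + 1) := by positivity
  simpa [mul_div_cancel₀ δ (by positivity : 2 * c + 1 ≠ 0)] using hv_le _ hδ'

end SqrtComparison

theorem HasDerivAt.div_one_add {μ : ℝ → ℝ} {m t : ℝ} (hμ : HasDerivAt μ m t)
    (ht : 1 + μ t ≠ 0) : HasDerivAt (fun s => μ s / (1 + μ s)) (m / (1 + μ t) ^ 2) t :=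
  (hμ.div (hμ.const_add 1) ht).congr_deriv (by ring)

theorem div_one_add_sq_le_two_mul_sqrt_div {Λ x y : ℝ} (hx : 0 ≤ x)
    (hy : y ≤ 2 * Λ * (1 + x) ^ ((3 : ℝ) / 2) * x ^ ((1 : ℝ) / 2)) :
    y / (1 + x) ^ 2 ≤ 2 * Λ * √(x / (1 + x)) := by
  have hx1 : 0 < 1 + x := by linarith
  have h32 : (1 + x) ^ ((3 : ℝ) / 2) = (1 + x) * √(1 + x) := by
    rw [show (3 : ℝ) / 2 = 1 + 1 / 2 by norm_num, Real.rpow_add hx1, Real.rpow_one,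
      Real.sqrt_eq_rpow]
  rw [h32, ← Real.sqrt_eq_rpow] at hy
  have hs : 0 < √(1 + x) := Real.sqrt_pos.2 hx1
  rw [div_le_iff₀ (by positivity), Real.sqrt_div hx]
  calc y ≤ 2 * Λ * ((1 + x) * √(1 + x)) * √x := hy
    _ = 2 * Λ * (√x / √(1 + x)) * (1 + x) ^ 2 := by
      field_simp
      rw [Real.sq_sqrt hx1.le]

theorem slope_ode_comparison_general (Λ T : ℝ) (hΛ : 0 < Λ)
    (μ μ' : ℝ → ℝ)
    (hderiv : ∀ t ∈ Icc (0 : ℝ) T, HasDerivAt μ (μ' t) t)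
    (h0 : μ 0 = 0)
    (hnonneg : ∀ t ∈ Icc (0 : ℝ) T, 0 ≤ μ t)
    (hineq : ∀ t ∈ Icc (0 : ℝ) T,
      μ' t ≤ 2 * Λ * (1 + μ t) ^ ((3 : ℝ) / 2) * (μ t) ^ ((1 : ℝ) / 2)) :
    ∀ t ∈ Icc (0 : ℝ) T, μ t / (1 + μ t) ≤ Λ ^ 2 * t ^ 2 := by
  intro t ht
  have h1μ : ∀ s ∈ Icc (0 : ℝ) T, 1 + μ s ≠ 0 := fun s hs => by linarith [hnonneg s hs]
  have h := le_sq_of_deriv_le_two_mul_sqrt hΛ.le (v := fun s => μ s / (1 + μ s))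
    (fun s hs => (hderiv s hs).div_one_add (h1μ s hs)) (by simp [h0])
    (fun s hs => div_nonneg (hnonneg s hs) (by linarith [hnonneg s hs]))
    (fun s hs => div_one_add_sq_le_two_mul_sqrt_div (hnonneg s hs) (hineq s hs)) ht
  simpa [mul_pow] using h

/-- ODE comparison for the squared slope along a ray: if `μ(0) = 0`, `μ ≥ 0`, and
`μ' ≤ 2Λ(1+μ)^{3/2}·μ^{1/2}` on `[0,T]`, then `μ(t)/(1+μ(t)) ≤ Λ²t²` on `[0,T]`. -/
theorem slope_ode_comparison (Λ T : ℝ) (hΛ : 0 < Λ) (hT : 0 < T)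
    (μ μ' : ℝ → ℝ)
    (hderiv : ∀ t ∈ Icc (0 : ℝ) T, HasDerivAt μ (μ' t) t)
    (h0 : μ 0 = 0)
    (hnonneg : ∀ t ∈ Icc (0 : ℝ) T, 0 ≤ μ t)
    (hineq : ∀ t ∈ Icc (0 : ℝ) T,
      μ' t ≤ 2 * Λ * (1 + μ t) ^ ((3 : ℝ) / 2) * (μ t) ^ ((1 : ℝ) / 2)) :
    ∀ t ∈ Icc (0 : ℝ) T, μ t / (1 + μ t) ≤ Λ ^ 2 * t ^ 2 :=
  slope_ode_comparison_general Λ T hΛ μ μ' hderiv h0 hnonneg hineq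
end

section
/- Let n ≥ 2 be an integer and let λ : Fin n → ℝ satisfy H := ∑ᵢ λᵢ > 0 and ∑ᵢ λᵢ² ≤ H²/(n−1). Then λᵢ ≥ 0 for every i. -/
/-!
Suppose `λᵢ < 0` and write `S` for the sum of the other `n - 1` entries, so that `S > -λᵢ > 0`.
Cauchy–Schwarz on those entries gives `S² ≤ (n - 1) ∑_{j ≠ i} λⱼ²`, and inserting this into
`(n - 1) ∑ λ² ≤ (λᵢ + S)²` leaves `(n - 2) λᵢ² ≤ 2 λᵢ S < -2 λᵢ²`, which is absurd.
-/

open Finset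

theorem nonneg_of_card_sub_one_mul_sum_sq_le_sq_sum {ι : Type*} [Fintype ι] (a : ι → ℝ)
    (hpos : 0 < ∑ j, a j)
    (hpinch : ((Fintype.card ι : ℝ) - 1) * ∑ j, a j ^ 2 ≤ (∑ j, a j) ^ 2) (i : ι) :
    0 ≤ a i := by
  classical
  by_contra! hneg
  have hcs : (∑ j ∈ univ.erase i, a j) ^ 2 ≤
      ((Fintype.card ι : ℝ) - 1) * ∑ j ∈ univ.erase i, a j ^ 2 := by
    simpa [card_erase_of_mem, Nat.cast_sub (Fintype.card_pos_iff.2 ⟨i⟩)] using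
      sq_sum_le_card_mul_sum_sq (s := univ.erase i) (f := a)
  simp only [← add_sum_erase _ _ (mem_univ i)] at hpos hpinch
  nlinarith [mul_pos (neg_pos.2 hneg) hpos,
    mul_nonneg (Nat.cast_nonneg (Fintype.card ι) : (0 : ℝ) ≤ _) (sq_nonneg (a i))]

theorem pinching_implies_nonneg_general (n : ℕ) (l : Fin n → ℝ)
    (hH : 0 < ∑ i, l i)
    (hpinch : ∑ i, (l i) ^ 2 ≤ (∑ i, l i) ^ 2 / ((n : ℝ) - 1)) :
    ∀ i, 0 ≤ l i := by
  intro i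
  have hn : (1 : ℝ) ≤ n := by exact_mod_cast i.pos
  have hpinch' : ((n : ℝ) - 1) * ∑ i, l i ^ 2 ≤ (∑ i, l i) ^ 2 := by
    rcases (sub_nonneg.2 hn).eq_or_lt with hn1 | hn1
    · -- `n = 1`: `hpinch` divides by zero, but the weighted form holds trivially.
      rw [← hn1, zero_mul]
      positivity
    · rwa [mul_comm, ← le_div_iff₀ hn1]
  exact nonneg_of_card_sub_one_mul_sum_sq_le_sq_sum l hH (by simpa using hpinch') i

/-- Algebraic pinching lemma: if `λ₁,…,λₙ` satisfy `H := ∑ λᵢ > 0` and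
`∑ λᵢ² ≤ H²/(n-1)`, then every `λᵢ` is nonnegative. -/
theorem pinching_implies_nonneg (n : ℕ) (hn : 2 ≤ n) (l : Fin n → ℝ)
    (hH : 0 < ∑ i, l i)
    (hpinch : ∑ i, (l i) ^ 2 ≤ (∑ i, l i) ^ 2 / ((n : ℝ) - 1)) :
    ∀ i, 0 ≤ l i :=
  pinching_implies_nonneg_general n l hH hpinch
end

section
/- Let n ≥ 2 be an integer and let h be a real symmetric n×n matrix with trace H := tr(h) > 0 and squared Frobenius norm ∑_{i,j} h_{ij}² ≤ H²/(n−1). Then h is positive semidefinite. -/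
/-!
Diagonalise `h`: its trace and squared Frobenius norm are `∑ λᵢ` and `∑ λᵢ²` for its eigenvalues
`λᵢ`, so it suffices to show that `(n - 1) ∑ λᵢ² ≤ (∑ λᵢ)²` with `∑ λᵢ > 0` forces every `λₖ ≥ 0`.
If `λₖ < 0`, Cauchy–Schwarz on the other `n - 1` eigenvalues, whose sum `S = H - λₖ` exceeds `H`,
gives `(n - 1) ∑ λᵢ² ≥ (n - 1) λₖ² + S² > (S + λₖ)² = H²`.
-/

open Matrix Finset

theorem nonneg_of_card_sub_one_mul_sum_sq_le {ι : Type*} [Fintype ι] (μ : ι → ℝ)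
    (hsum : 0 < ∑ i, μ i)
    (hpinch : ((Fintype.card ι : ℝ) - 1) * ∑ i, μ i ^ 2 ≤ (∑ i, μ i) ^ 2) (k : ι) :
    0 ≤ μ k := by
  by_contra! hk
  classical
  set rest := univ.erase k
  have hcard : (#rest : ℝ) = (Fintype.card ι : ℝ) - 1 := by
    rw [card_erase_of_mem (mem_univ k), card_univ, Nat.cast_pred (Fintype.card_pos_iff.mpr ⟨k⟩)]
  have hcs : (∑ i ∈ rest, μ i) ^ 2 ≤ #rest * ∑ i ∈ rest, μ i ^ 2 := sq_sum_le_card_mul_sum_sq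
  rw [← add_sum_erase _ _ (mem_univ k)] at hsum hpinch
  rw [← add_sum_erase _ _ (mem_univ k), ← hcard] at hpinch
  have hrest : 0 ≤ (#rest : ℝ) := Nat.cast_nonneg _
  nlinarith [mul_nonneg hrest (sq_nonneg (μ k))]

namespace Matrix

variable {n : Type*} [Fintype n]

theorem trace_mul_transpose_self {R : Type*} [CommSemiring R] (A : Matrix n n R) :
    (A * Aᵀ).trace = ∑ i, ∑ j, A i j ^ 2 := by
  simp [trace, mul_apply, sq]

variable [DecidableEq n] {𝕜 : Type*} [RCLike 𝕜]

theorem trace_conjStarAlgAut (u : unitary (Matrix n n 𝕜)) (X : Matrix n n 𝕜) :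
    (Unitary.conjStarAlgAut 𝕜 _ u X).trace = X.trace := by
  rw [Unitary.conjStarAlgAut_apply, trace_mul_cycle, Unitary.coe_star_mul_self, one_mul]

theorem IsHermitian.trace_mul_self_eq_sum_sq_eigenvalues {A : Matrix n n 𝕜}
    (hA : A.IsHermitian) :
    (A * A).trace = ∑ i, (hA.eigenvalues i : 𝕜) ^ 2 := by
  conv_lhs => rw [hA.spectral_theorem, ← map_mul, trace_conjStarAlgAut, diagonal_mul_diagonal,
    trace_diagonal]
  simp [sq]

end Matrix

/-- Matrix form of the pinching lemma: a real symmetric matrix `h` with trace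
`H > 0` and squared Frobenius norm at most `H²/(n-1)` is positive semidefinite. -/
theorem pinching_implies_posSemidef (n : ℕ) (hn : 2 ≤ n)
    (h : Matrix (Fin n) (Fin n) ℝ) (hsymm : h.IsSymm)
    (htrace : 0 < h.trace)
    (hpinch : ∑ i, ∑ j, (h i j) ^ 2 ≤ h.trace ^ 2 / ((n : ℝ) - 1)) :
    h.PosSemidef := by
  have hH : h.IsHermitian := isHermitian_iff_isSymm.mpr hsymm
  have htr : h.trace = ∑ i, hH.eigenvalues i := by simpa using hH.trace_eq_sum_eigenvalues
  have hfrob : ∑ i, ∑ j, h i j ^ 2 = ∑ i, hH.eigenvalues i ^ 2 := by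
    rw [← trace_mul_transpose_self, hsymm.eq]
    simpa using hH.trace_mul_self_eq_sum_sq_eigenvalues
  have hn1 : (0 : ℝ) < n - 1 := by
    have : (2 : ℝ) ≤ n := by exact_mod_cast hn
    linarith
  refine hH.posSemidef_iff_eigenvalues_nonneg.mpr fun k ↦
    nonneg_of_card_sub_one_mul_sum_sq_le hH.eigenvalues (htr ▸ htrace) ?_ k
  rw [Fintype.card_fin, ← hfrob, ← htr, mul_comm]
  exact (le_div_iff₀ hn1).mp hpinch
end
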